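/- Let k be an infinite field, (A_i)_{i∈I} a family of k-algebras, B a k-algebra with dim_k(B) < 2^{ℵ0}, and f : A = ∏_{i∈I} A_i → B a surjective k-algebra homomorphism. Then the composite homomorphism A → B → B/Z(B) factors as A → A/U_0 × … × A/U_{n-1} → B/Z(B) for some n ∈ ℕ, where U_0, …, U_{n-1} are countably complete ultrafilters on I. -/

import Mathlib

universe u

/-- The setoid on a dependent product given by a filter. -/
def redSetoid {I : Type u} (F : Filter I) (A : I → Type u) : Setoid (∀ i, A i) where
  r a b := {i | a i = b i} ∈ F
  iseqv := by
    refine ⟨fun a => ?_, fun {a b} h => ?_, fun {a b c} h₁ h₂ => ?_⟩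
    · simp
    · simpa [eq_comm] using h
    · exact Filter.mem_of_superset (Filter.inter_mem h₁ h₂)
        (fun i hi => hi.1.trans hi.2)

/-- The reduced product of a family of sets with respect to a filter. -/
def ReducedProduct {I : Type u} (F : Filter I) (A : I → Type u) : Type u :=
  Quotient (redSetoid F A)

/-- The canonical quotient map onto a reduced product. -/
def reducedMk {I : Type u} (F : Filter I) (A : I → Type u) (a : ∀ i, A i) :
    ReducedProduct F A :=
  Quotient.mk (redSetoid F A) a

/-- A filter is countably complete if it is closed under countable
intersections of its members. -/
def CountablyComplete {I : Type u} (F : Filter I) : Prop :=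
  ∀ s : ℕ → Set I, (∀ n, s n ∈ F) → (⋂ n, s n) ∈ F

/-- The total annihilator ideal `Z(B) = {x | xB = Bx = 0}` of a (nonunital,
nonassociative) `k`-algebra, as a `k`-submodule. -/
def totalAnnihilator (k : Type u) (B : Type u) [Field k]
    [NonUnitalNonAssocRing B] [Module k B] [SMulCommClass k B B]
    [IsScalarTower k B B] : Submodule k B where
  carrier := {x | ∀ y : B, x * y = 0 ∧ y * x = 0}
  zero_mem' := fun y => ⟨zero_mul y, mul_zero y⟩
  add_mem' := by
    intro a b ha hb y
    exact ⟨by rw [add_mul, (ha y).1, (hb y).1, add_zero],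
           by rw [mul_add, (ha y).2, (hb y).2, add_zero]⟩
  smul_mem' := by
    intro c x hx y
    exact ⟨by rw [smul_mul_assoc, (hx y).1, smul_zero],
           by rw [mul_smul_comm, (hx y).2, smul_zero]⟩

/-!
Call `S ⊆ I` negligible if `f` maps every element supported on `S` into `Z(B)`. The complements
of negligible sets form a filter `F`, and `A → B/Z(B)` factors through the reduced product `A/F`.
`I` has no partition into infinitely many non-negligible pieces: gluing, along an almost disjoint
family of `2 ^ ℵ₀` subsets of `ℕ`, witnesses of non-negligibility taken from the pieces would
give `2 ^ ℵ₀` linearly independent elements of `B`. Hence `F` is the intersection of finitely many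
ultrafilters `F ⊓ 𝓟 P`. Each of them is countably complete: a partition of `P` into countably
many negligible pieces would embed `k ^ ℕ`, modulo the functions vanishing on a set of a
nonprincipal ultrafilter on `ℕ`, into `B/Z(B)`, while that quotient has dimension `≥ 2 ^ ℵ₀`.
-/

open Filter Set Cardinal

/-- The sets `range (prefixCode x)` form an almost disjoint family of `2 ^ ℵ₀` infinite subsets
of `ℕ`. -/
def prefixCode (x : ℕ → Bool) (n : ℕ) : ℕ := Encodable.encode ((List.range n).map x)

theorem prefixCode_eq_prefixCode_iff {x y : ℕ → Bool} {n m : ℕ} :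
    prefixCode x n = prefixCode y m ↔ n = m ∧ ∀ j < n, x j = y j := by
  unfold prefixCode
  rw [Encodable.encode_inj]
  constructor
  · intro h
    have hnm : n = m := by simpa using congrArg List.length h
    subst hnm
    exact ⟨rfl, fun j hj => by simpa using List.map_inj_left.mp h j (List.mem_range.mpr hj)⟩
  · rintro ⟨rfl, h⟩
    exact List.map_inj_left.mpr fun j hj => h j (List.mem_range.mp hj)

theorem prefixCode_injective (x : ℕ → Bool) : Function.Injective (prefixCode x) :=
  fun _ _ h => (prefixCode_eq_prefixCode_iff.mp h).1

theorem finite_setOf_prefixCode_eq {x y : ℕ → Bool} (hxy : x ≠ y) :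
    {n | prefixCode x n = prefixCode y n}.Finite := by
  obtain ⟨j, hj⟩ := Function.ne_iff.mp hxy
  refine (Set.finite_Iic j).subset fun n hn => ?_
  by_contra hjn
  exact hj ((prefixCode_eq_prefixCode_iff.mp hn).2 j (not_le.mp hjn))

theorem finite_range_prefixCode_inter {x y : ℕ → Bool} (hxy : x ≠ y) :
    (range (prefixCode x) ∩ range (prefixCode y)).Finite := by
  refine ((finite_setOf_prefixCode_eq hxy).image (prefixCode x)).subset ?_
  rintro _ ⟨⟨n, rfl⟩, m, hm⟩
  obtain rfl := (prefixCode_eq_prefixCode_iff.mp hm).1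
  exact ⟨m, hm.symm, rfl⟩

theorem exists_mem_apply_eq_zero_of_rank_lt {k V M : Type*} [DivisionRing k]
    [AddCommGroup V] [Module k V] [AddCommGroup M] [Module k M]
    (hV : Module.rank k V < 2 ^ ℵ₀) (u : Set ℕ → V) (L : ℕ → V →ₗ[k] M)
    (hL : ∀ S n, n ∉ S → L n (u S) = 0) : ∃ S n, n ∈ S ∧ L n (u S) = 0 := by
  classical
  have hdep : ¬ LinearIndependent k fun x => u (range (prefixCode x)) := fun hli => by
    have h : 2 ^ ℵ₀ ≤ lift.{0} (Module.rank k V) := by simpa using hli.cardinal_lift_le_rank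
    exact h.not_gt (by simpa using lift_lt.{_, 0}.mpr hV)
  obtain ⟨s, g, hsum, x, hx, hgx⟩ := not_linearIndependent_iff.mp hdep
  have hjunk : (⋃ y ∈ s.erase x, range (prefixCode x) ∩ range (prefixCode y)).Finite :=
    (s.erase x).finite_toSet.biUnion fun y hy =>
      finite_range_prefixCode_inter (Finset.ne_of_mem_erase hy).symm
  obtain ⟨n, ⟨n, rfl⟩, hn⟩ :=
    (Set.infinite_range_of_injective (prefixCode_injective x)).exists_notMem_finite hjunk
  refine ⟨range (prefixCode x), prefixCode x n, mem_range_self n, ?_⟩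
  have := congrArg (L (prefixCode x n)) hsum
  rw [map_sum, Finset.sum_eq_single x, map_zero, map_smul] at this
  · exact (smul_eq_zero.mp this).resolve_left hgx
  · intro y hy hyx
    rw [map_smul, hL _ _ fun hmem => hn (mem_biUnion (Finset.mem_erase.mpr ⟨hyx, hy⟩)
      ⟨mem_range_self n, hmem⟩), smul_zero]
  · exact fun h => (h hx).elim

open Polynomial in
theorem finite_setOf_sum_mul_inv_sub_eq_zero {k : Type*} [Field k] {c : ℕ → k}
    (hc : Function.Injective c) {s : Finset k} {g : k → k} {t₀ : k} (ht₀ : t₀ ∈ s)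
    (hg : g t₀ ≠ 0) : {n | ∑ t ∈ s, g t * (c n - t)⁻¹ = 0}.Finite := by
  classical
  -- clearing denominators: `p x = (∏ t ∈ s, (x - t)) * ∑ t ∈ s, g t * (x - t)⁻¹` for `x ∉ s`
  set p : k[X] := ∑ t ∈ s, C (g t) * ∏ t' ∈ s.erase t, (X - C t')
  have heval : ∀ x, p.eval x = ∑ t ∈ s, g t * ∏ t' ∈ s.erase t, (x - t') := by
    simp [p, eval_finsetSum, eval_prod]
  have hp : p ≠ 0 := fun h => by
    have := heval t₀
    rw [h, eval_zero, Finset.sum_eq_single t₀ (fun t ht hne => ?_) (fun h => (h ht₀).elim)]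
      at this
    · exact mul_ne_zero hg (Finset.prod_ne_zero_iff.mpr fun t ht =>
        sub_ne_zero.mpr (Finset.ne_of_mem_erase ht).symm) this.symm
    · rw [Finset.prod_eq_zero (Finset.mem_erase.mpr ⟨fun h => hne h.symm, ht₀⟩) (sub_self _),
        mul_zero]
  refine ((s.finite_toSet.union (finite_setOfPred_isRoot hp)).preimage hc.injOn).subset
    fun n hn => ?_
  by_contra hns
  simp only [mem_preimage, mem_union, Finset.mem_coe, mem_ofPred_eq, not_or] at hns hn
  apply hns.2
  have hterm : ∀ t ∈ s, g t * ∏ t' ∈ s.erase t, (c n - t') =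
      (∏ t' ∈ s, (c n - t')) * (g t * (c n - t)⁻¹) := fun t ht => by
    rw [← Finset.mul_prod_erase s (fun t' => c n - t') ht, mul_comm (c n - t),
    mul_mul_mul_comm, mul_inv_cancel₀ (sub_ne_zero.mpr fun h : c n = t => hns.1 (h ▸ ht)), mul_one,
    mul_comm]
  rw [IsRoot, heval, Finset.sum_congr rfl hterm, ← Finset.mul_sum, hn, mul_zero]

theorem two_pow_aleph0_le_rank_quotient {k : Type*} [Field k] [Infinite k]
    (N : Submodule k (ℕ → k)) (hN : ∀ w ∈ N, {j | w j = 0}.Infinite) :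
    2 ^ ℵ₀ ≤ Module.rank k ((ℕ → k) ⧸ N) := by
  let c := Infinite.natEmbedding k
  rcases lt_or_ge #k (2 ^ ℵ₀) with hk | hk
  · have hinj : Function.Injective fun x : ℕ → Bool => N.mkQ fun n => c (prefixCode x n) := by
      intro x y hxy
      by_contra hne
      refine hN _ ((Submodule.Quotient.eq N).mp hxy)
        ((finite_setOf_prefixCode_eq hne).subset fun n hn => c.injective (sub_eq_zero.mp hn))
    have hmk : 2 ^ ℵ₀ ≤ #((ℕ → k) ⧸ N) := by
      simpa using lift_mk_le_lift_mk_of_injective hinj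
    rw [Module.Free.rank_eq_mk_of_infinite_lt]
    · exact hmk
    · simpa using hk.trans_le hmk
  · have hli : LinearIndependent k fun t : k => N.mkQ fun n => (c n - t)⁻¹ := by
      rw [linearIndependent_iff']
      intro s g hsum t ht
      by_contra hg
      have hmem : (∑ t ∈ s, g t • fun n => (c n - t)⁻¹) ∈ N :=
        (Submodule.Quotient.mk_eq_zero N).mp (by simpa [← Submodule.mkQ_apply] using hsum)
      refine hN _ hmem ((finite_setOf_sum_mul_inv_sub_eq_zero c.injective ht hg).subset
        fun n hn => ?_)
      simpa [Finset.sum_apply] using hn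
    exact hk.trans hli.cardinal_le_rank

section FilterSplitting

variable {I : Type*} {F : Filter I}

/-- `I` cannot be partitioned into infinitely many `F`-positive pieces (indexed by `ℕ`). -/
def HasNoInfinitePartition (F : Filter I) : Prop :=
  ∀ ν : I → ℕ, ∃ n, F ⊓ 𝓟 (ν ⁻¹' {n}) = ⊥

theorem HasNoInfinitePartition.not_forall_inf_principal_sdiff_succ_neBot
    (hF : HasNoInfinitePartition F) {T : ℕ → Set I} (hT : Antitone T) :
    ¬ ∀ n, (F ⊓ 𝓟 (T n \ T (n + 1))).NeBot := by
  classical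
  intro hpos
  obtain ⟨n, hn⟩ := hF fun i => if hi : ∃ n, i ∉ T (n + 1) then Nat.find hi else 0
  refine (hpos n).ne (eq_bot_mono (inf_le_inf_left F (principal_mono.mpr ?_)) hn)
  rintro i ⟨hin, hin'⟩
  have h : ∃ n, i ∉ T (n + 1) := ⟨n, hin'⟩
  simp only [mem_preimage, mem_singleton_iff, dif_pos h, Nat.find_eq_iff]
  exact ⟨hin', fun m hm hm' => hm' (hT (Nat.succ_le_of_lt hm) hin)⟩

theorem HasNoInfinitePartition.not_of_forall_exists_inf_principal_sdiff_neBot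
    (hF : HasNoInfinitePartition F) {p : Set I → Prop}
    (h : ∀ T, p T → ∃ T', p T' ∧ T' ⊆ T ∧ (F ⊓ 𝓟 (T \ T')).NeBot) (T : Set I) : ¬ p T := by
  intro hT
  choose! g hg using h
  have hp : ∀ n, p (g^[n] T) := fun n => by
    induction n with
    | zero => exact hT
    | succ n ih => rw [Function.iterate_succ_apply']; exact (hg _ ih).1
  refine hF.not_forall_inf_principal_sdiff_succ_neBot (T := fun n => g^[n] T)
    (antitone_nat_of_succ_le fun n => ?_) fun n => ?_
  · rw [Function.iterate_succ_apply']; exact (hg _ (hp n)).2.1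
  · simp only [Function.iterate_succ_apply']; exact (hg _ (hp n)).2.2

theorem exists_inf_principal_neBot_of_forall_ne {G : Filter I} [G.NeBot]
    (h : ∀ U : Ultrafilter I, ↑U ≠ G) : ∃ s, (G ⊓ 𝓟 s).NeBot ∧ (G ⊓ 𝓟 sᶜ).NeBot := by
  obtain ⟨s, hsU, hsG⟩ : ∃ s ∈ Ultrafilter.of G, s ∉ G := by
    by_contra! hle
    exact h _ (le_antisymm (Ultrafilter.of_le G) hle)
  exact ⟨s, (Ultrafilter.of G).neBot.mono (le_inf (Ultrafilter.of_le G) (le_principal_iff.mpr hsU)),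
    ⟨fun hbot => hsG (mem_iff_inf_principal_compl.mpr hbot)⟩⟩

theorem HasNoInfinitePartition.exists_subset_coe_ultrafilter_eq_inf_principal
    (hF : HasNoInfinitePartition F) {S : Set I} (hS : (F ⊓ 𝓟 S).NeBot) :
    ∃ P ⊆ S, ∃ U : Ultrafilter I, ↑U = F ⊓ 𝓟 P := by
  by_contra! h
  refine hF.not_of_forall_exists_inf_principal_sdiff_neBot
    (p := fun T => T ⊆ S ∧ (F ⊓ 𝓟 T).NeBot) ?_ S ⟨subset_rfl, hS⟩
  rintro T ⟨hTS, hT⟩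
  obtain ⟨s, hs, hsc⟩ := exists_inf_principal_neBot_of_forall_ne (h T hTS)
  refine ⟨T ∩ s, ⟨inter_subset_left.trans hTS, ?_⟩, inter_subset_left, ?_⟩
  · rwa [← inf_principal, ← inf_assoc]
  · rwa [sdiff_self_inter, sdiff_eq, ← inf_principal, ← inf_assoc]

theorem HasNoInfinitePartition.exists_eq_iSup_coe_ultrafilter (hF : HasNoInfinitePartition F) :
    ∃ (n : ℕ) (U : Fin n → Ultrafilter I), (∀ m, ∃ P, ↑(U m) = F ⊓ 𝓟 P) ∧
      F = ⨆ m, (U m : Filter I) := by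
  obtain ⟨n, P, hP, hcover⟩ : ∃ (n : ℕ) (P : Fin n → Set I),
      (∀ m, ∃ U : Ultrafilter I, ↑U = F ⊓ 𝓟 (P m)) ∧ (⋃ m, P m) ∈ F := by
    by_contra! h
    refine hF.not_of_forall_exists_inf_principal_sdiff_neBot (p := fun R => ∃ (n : ℕ)
      (P : Fin n → Set I), (∀ m, ∃ U : Ultrafilter I, ↑U = F ⊓ 𝓟 (P m)) ∧ Rᶜ ⊆ ⋃ m, P m)
      ?_ univ ⟨0, Fin.elim0, fun m => m.elim0, by simp⟩
    rintro R ⟨n, P, hP, hR⟩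
    have hRpos : (F ⊓ 𝓟 R).NeBot :=
      ⟨fun hbot => h n P hP (mem_of_superset (inf_principal_eq_bot.mp hbot) hR)⟩
    obtain ⟨Q, hQR, U, hU⟩ := hF.exists_subset_coe_ultrafilter_eq_inf_principal hRpos
    refine ⟨R \ Q, ⟨n + 1, Fin.cons Q P, Fin.cases ⟨U, hU⟩ hP, fun i hi => ?_⟩, sdiff_subset, ?_⟩
    · simp only [mem_iUnion, Fin.exists_fin_succ, Fin.cons_zero, Fin.cons_succ]
      by_cases hiQ : i ∈ Q
      · exact Or.inl hiQ
      · exact Or.inr (mem_iUnion.mp (hR fun hiR => hi ⟨hiR, hiQ⟩))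
    · rw [sdiff_sdiff_cancel_left hQR, ← hU]
      exact U.neBot
  choose U hU using hP
  refine ⟨n, U, fun m => ⟨P m, hU m⟩, le_antisymm (fun S hS => ?_)
    (iSup_le fun m => hU m ▸ inf_le_left)⟩
  have hSP : ∀ m, (P m)ᶜ ∪ S ∈ F := fun m => mem_inf_principal'.mp (hU m ▸ mem_iSup.mp hS m)
  refine mem_of_superset (inter_mem hcover (iInter_mem.mpr hSP)) ?_
  rintro i ⟨hi, hiS⟩
  obtain ⟨m, hm⟩ := mem_iUnion.mp hi
  exact (mem_iInter.mp hiS m).resolve_left (not_not.mpr hm)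

theorem countablyComplete_of_forall_exists_preimage_mem {U : Ultrafilter I}
    (h : ∀ ν : I → ℕ, ∃ n, ν ⁻¹' {n} ∈ U) : CountablyComplete (U : Filter I) := by
  classical
  intro s hs
  by_contra hns
  obtain ⟨n, hn⟩ := h fun i => if hi : ∃ n, i ∉ s n then Nat.find hi else 0
  obtain ⟨i, ⟨hin, his⟩, hi⟩ :=
    U.nonempty_of_mem (inter_mem (inter_mem hn (hs n)) (U.compl_mem_iff_notMem.mpr hns))
  have h' : ∃ n, i ∉ s n := by simpa using hi
  simp only [mem_preimage, mem_singleton_iff, dif_pos h'] at hin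
  exact (hin ▸ Nat.find_spec h') his

end FilterSplitting

section Annihilator

variable {k : Type u} [Field k] {I : Type*} {A : I → Type*}
  [∀ i, NonUnitalNonAssocRing (A i)] [∀ i, Module k (A i)]
  {B : Type u} [NonUnitalNonAssocRing B] [Module k B] [SMulCommClass k B B]
  [IsScalarTower k B B] {f : (∀ i, A i) →ₙₐ[k] B}

variable (f) in
/-- The finest filter `F` for which `A → B/Z(B)` factors through the reduced product `A/F`. -/
def annihilatorFilter : Filter I where
  sets := {S | ∀ a : ∀ i, A i, (∀ i ∈ S, a i = 0) → f a ∈ totalAnnihilator k B}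
  univ_sets a ha := by
    rw [show a = 0 from funext fun i => ha i trivial, map_zero]
    exact zero_mem _
  sets_of_superset hS hST a ha := hS a fun i hi => ha i (hST hi)
  inter_sets {S T} hS hT a ha := by
    classical
    have hsplit : a = S.piecewise (0 : ∀ i, A i) a + S.piecewise a 0 := funext fun i => by
      by_cases hi : i ∈ S <;> simp [hi]
    rw [hsplit, map_add]
    refine add_mem (hS _ fun i hi => by simp [hi]) (hT _ fun i hi => ?_)
    by_cases hiS : i ∈ S
    · simp [hiS, ha i ⟨hiS, hi⟩]
    · simp [hiS]

theorem mem_annihilatorFilter {S : Set I} : S ∈ annihilatorFilter f ↔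
    ∀ a : ∀ i, A i, (∀ i ∈ S, a i = 0) → f a ∈ totalAnnihilator k B :=
  Iff.rfl

theorem mk_map_eq_of_setOf_eq_mem {a b : ∀ i, A i}
    (h : {i | a i = b i} ∈ annihilatorFilter f) :
    (Submodule.Quotient.mk (f a) : B ⧸ totalAnnihilator k B) = Submodule.Quotient.mk (f b) := by
  rw [Submodule.Quotient.eq, ← map_sub]
  exact h _ fun i hi => sub_eq_zero.mpr hi

theorem exists_map_mul_ne_zero_of_inf_principal_neBot (hf : Function.Surjective f) {D : Set I}
    (hD : (annihilatorFilter f ⊓ 𝓟 D).NeBot) :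
    ∃ x y : ∀ i, A i, (∀ i ∉ D, y i = 0) ∧ f x * f y ≠ 0 := by
  classical
  obtain ⟨a, ha, haZ⟩ : ∃ a : ∀ i, A i, (∀ i ∉ D, a i = 0) ∧ f a ∉ totalAnnihilator k B := by
    simpa [mem_annihilatorFilter] using fun h => hD.ne (inf_principal_eq_bot.mpr h)
  obtain ⟨y, hy⟩ := not_forall.mp haZ
  obtain ⟨b, rfl⟩ := hf y
  by_cases hab : f a * f b = 0
  · exact ⟨b, a, ha, not_and.mp hy hab⟩
  · refine ⟨a, D.piecewise b 0, fun i hi => by simp [hi], ?_⟩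
    have hab' : a * D.piecewise b 0 = a * b := funext fun i => by
      by_cases hi : i ∈ D <;> simp [hi, ha]
    rwa [← map_mul, hab', map_mul]

theorem hasNoInfinitePartition_annihilatorFilter (hB : Module.rank k B < 2 ^ ℵ₀)
    (hf : Function.Surjective f) : HasNoInfinitePartition (annihilatorFilter f) := by
  classical
  intro ν
  by_contra! h
  choose x y hy hxy using fun n => exists_map_mul_ne_zero_of_inf_principal_neBot hf (h n)
  let glue : Set ℕ → ∀ i, A i := fun S => (ν ⁻¹' S).piecewise (fun i => x (ν i) i) 0
  have hglue : ∀ S n, glue S * y n = if n ∈ S then x n * y n else 0 := fun S n => funext fun i => by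
    by_cases hi : ν i = n
    · by_cases hn : n ∈ S <;> simp [glue, hi, hn]
    · have := hy n i hi
      by_cases hn : n ∈ S <;> by_cases hiS : ν i ∈ S <;> simp [glue, hiS, hn, this]
  obtain ⟨S, n, hn, h0⟩ := exists_mem_apply_eq_zero_of_rank_lt hB (fun S => f (glue S))
    (fun n => LinearMap.mulRight k (f (y n))) fun S n hn => by simp [← map_mul, hglue, hn]
  simp only [LinearMap.mulRight_apply, ← map_mul, hglue, if_pos hn] at h0
  exact hxy n (by rwa [map_mul] at h0)

variable [∀ i, SMulCommClass k (A i) (A i)] [∀ i, IsScalarTower k (A i) (A i)]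

theorem map_mem_totalAnnihilator_of_map_smul_mem (hf : Function.Surjective f) {θ : I → k}
    {a : ∀ i, A i} (h₁ : f (θ • a) ∈ totalAnnihilator k B)
    (h₂ : f ((1 - θ * θ⁻¹) • a) ∈ totalAnnihilator k B) : f a ∈ totalAnnihilator k B := by
  -- `θ • a` and `θ⁻¹ • b` multiply to `(θ * θ⁻¹) • (a * b)`, so `(θ * θ⁻¹) • a` is annihilating
  have h₃ : f ((θ * θ⁻¹) • a) ∈ totalAnnihilator k B := fun y => by
    obtain ⟨b, rfl⟩ := hf y
    constructor
    · rw [← map_mul, smul_mul_assoc, ← smul_mul_smul_comm, map_mul, (h₁ _).1]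
    · rw [← map_mul, mul_smul_comm, mul_comm θ, ← smul_mul_smul_comm, map_mul, (h₁ _).2]
  simpa [← map_add, ← add_smul] using add_mem h₃ h₂

theorem exists_preimage_singleton_mem [Infinite k] (hB : Module.rank k B < 2 ^ ℵ₀)
    (hf : Function.Surjective f) {U : Ultrafilter I} {a : ∀ i, A i}
    (ha : f a ∉ totalAnnihilator k B)
    (hU : ∀ θ : I → k, {i | θ i = 0} ∈ U → f (θ • a) ∈ totalAnnihilator k B) (ν : I → ℕ) :
    ∃ n, ν ⁻¹' {n} ∈ U := by
  by_contra! hν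
  let Λ : (ℕ → k) →ₗ[k] B ⧸ totalAnnihilator k B := (totalAnnihilator k B).mkQ ∘ₗ
    (f : (∀ i, A i) →ₗ[k] B) ∘ₗ ((LinearMap.id (R := I → k)).smulRight a).restrictScalars k ∘ₗ
    LinearMap.funLeft k k ν
  have hker : ∀ w ∈ LinearMap.ker Λ, {j | w j = 0}.Infinite := fun w hw hfin => by
    have hw : f ((w ∘ ν) • a) ∈ totalAnnihilator k B := (Submodule.Quotient.mk_eq_zero _).mp hw
    have hmem : ν ⁻¹' {j | w j = 0} ∈ U := by
      by_contra hnot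
      refine ha (map_mem_totalAnnihilator_of_map_smul_mem hf hw (hU _ ?_))
      filter_upwards [U.compl_mem_iff_notMem.mpr hnot] with i hi
      simp [mul_inv_cancel₀ (show w (ν i) ≠ 0 from hi)]
    rw [← biUnion_preimage_singleton, U.finite_biUnion_mem_iff hfin] at hmem
    obtain ⟨j, -, hj⟩ := hmem
    exact hν j hj
  have hrank : Module.rank k ((ℕ → k) ⧸ LinearMap.ker Λ) < 2 ^ ℵ₀ := by
    rw [Λ.quotKerEquivRange.rank_eq]
    exact ((Submodule.rank_le _).trans (rank_quotient_le _)).trans_lt hB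
  exact (two_pow_aleph0_le_rank_quotient _ hker).not_gt hrank

theorem countablyComplete_of_coe_eq_inf_principal [Infinite k]
    (hB : Module.rank k B < 2 ^ ℵ₀) (hf : Function.Surjective f) {U : Ultrafilter I} {P : Set I}
    (hU : ↑U = annihilatorFilter f ⊓ 𝓟 P) : CountablyComplete (U : Filter I) := by
  obtain ⟨a, ha, haZ⟩ : ∃ a : ∀ i, A i, (∀ i ∉ P, a i = 0) ∧ f a ∉ totalAnnihilator k B := by
    simpa [mem_annihilatorFilter] using fun h => U.neBot.ne (hU ▸ inf_principal_eq_bot.mpr h)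
  refine countablyComplete_of_forall_exists_preimage_mem
    (exists_preimage_singleton_mem hB hf haZ fun θ hθ => ?_)
  rw [← Ultrafilter.mem_coe, hU, mem_inf_principal] at hθ
  refine hθ _ fun i hi => ?_
  by_cases hiP : i ∈ P
  · simp [show θ i = 0 from hi hiP]
  · simp [ha i hiP]

end Annihilator

/-- Let `k` be an infinite field, `B` a (nonunital,
nonassociative) `k`-algebra with `dim_k B < 2 ^ ℵ₀`, and `f : A = ∏ᵢ Aᵢ → B` a
surjective `k`-algebra homomorphism.  Then the composite `A → B → B/Z(B)`
factors through the natural map `A → A/U 0 × … × A/U (n-1)` for some finitely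
many countably complete ultrafilters `U 0, …, U (n-1)` on `I`. -/
theorem composite_factors_through_countably_complete_ultraproducts
    (k : Type u) [Field k] [Infinite k] {I : Type u} (A : I → Type u)
    [∀ i, NonUnitalNonAssocRing (A i)] [∀ i, Module k (A i)]
    [∀ i, SMulCommClass k (A i) (A i)] [∀ i, IsScalarTower k (A i) (A i)]
    (B : Type u) [NonUnitalNonAssocRing B] [Module k B] [SMulCommClass k B B]
    [IsScalarTower k B B] (hB : Module.rank k B < 2 ^ Cardinal.aleph0)
    (f : (∀ i, A i) →ₙₐ[k] B) (hf : Function.Surjective f) :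
    ∃ (n : ℕ) (U : Fin n → Ultrafilter I),
      (∀ m, CountablyComplete (U m : Filter I)) ∧
      ∃ g : (∀ m, ReducedProduct (U m : Filter I) A) → B ⧸ totalAnnihilator k B,
        (fun a => Submodule.Quotient.mk (f a) : (∀ i, A i) → B ⧸ totalAnnihilator k B)
          = g ∘ fun (a : ∀ i, A i) (m : Fin n) => reducedMk (U m : Filter I) A a := by
  obtain ⟨n, U, hUP, hFU⟩ :=
    (hasNoInfinitePartition_annihilatorFilter hB hf).exists_eq_iSup_coe_ultrafilter
  refine ⟨n, U, fun m => ?_, _,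
    (Function.FactorsThrough.extend_comp (fun _ => 0) fun a b hab => ?_).symm⟩
  · obtain ⟨P, hP⟩ := hUP m
    exact countablyComplete_of_coe_eq_inf_principal hB hf hP
  · refine mk_map_eq_of_setOf_eq_mem ?_
    rw [hFU, mem_iSup]
    exact fun m => Quotient.exact (congrFun hab m)
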